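/- (Bubble necessity.) Suppose 0 < γ < 1 and w < w_f^*, where w_f^* > 0 is the unique solution of c_y(1,G·w_f^*)/c_z(1,G·w_f^*) = G^γ. Then every equilibrium (S_t) satisfies liminf_{t→∞} G^{−t}·P_t > 0 and ∑_{t=1}^∞ r_t/P_t < ∞; that is, in every equilibrium the housing price grows at the same rate as the economy and contains a bubble (no fundamental equilibrium exists). -/

import Mathlib

/-!
With `ζ_t = z_t / y_t`, homogeneity turns the equilibrium condition into
`S_{t+1} = mrs(ζ_t) S_t - m c^γ / c_z(1, ζ_t)` with `mrs = c_y / c_z` increasing in `ζ`.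
If the share `S_t / (e1 G^t)` ever drops below a small `δ`, then `ζ_t ≤ G w_f^*`, so
`mrs(ζ_t) ≤ G^γ`, the share stays below `δ`, and `S_t / G^{γt}` falls by a fixed amount
each period, which is impossible. Hence `S_t ≥ δ e1 G^t`, while the rent is `O(G^{γt})` with
`γ < 1`: the price `P_t = S_t - r_t` grows like `G^t` and `r_t / P_t = O(G^{(γ-1)t})` is
summable.
-/

open Real Filter Set Topology

/-- Assumption C: `c` is a positive, homogeneous of degree 1, twice continuously
differentiable function on `(0,∞)²` with partial derivatives `cy, cz > 0`, second partial
derivatives `cyy, czz < 0`, and Inada conditions. -/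
structure AssumptionC (c cy cz cyy cyz czz : ℝ → ℝ → ℝ) : Prop where
  c_pos : ∀ ⦃y z : ℝ⦄, 0 < y → 0 < z → 0 < c y z
  homog : ∀ ⦃l y z : ℝ⦄, 0 < l → 0 < y → 0 < z → c (l * y) (l * z) = l * c y z
  hderiv_y : ∀ ⦃y z : ℝ⦄, 0 < y → 0 < z → HasDerivAt (fun u => c u z) (cy y z) y
  hderiv_z : ∀ ⦃y z : ℝ⦄, 0 < y → 0 < z → HasDerivAt (fun v => c y v) (cz y z) z
  hderiv_yy : ∀ ⦃y z : ℝ⦄, 0 < y → 0 < z → HasDerivAt (fun u => cy u z) (cyy y z) y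
  hderiv_yz : ∀ ⦃y z : ℝ⦄, 0 < y → 0 < z → HasDerivAt (fun v => cy y v) (cyz y z) z
  hderiv_zy : ∀ ⦃y z : ℝ⦄, 0 < y → 0 < z → HasDerivAt (fun u => cz u z) (cyz y z) y
  hderiv_zz : ∀ ⦃y z : ℝ⦄, 0 < y → 0 < z → HasDerivAt (fun v => cz y v) (czz y z) z
  cy_pos : ∀ ⦃y z : ℝ⦄, 0 < y → 0 < z → 0 < cy y z
  cz_pos : ∀ ⦃y z : ℝ⦄, 0 < y → 0 < z → 0 < cz y z
  cyy_neg : ∀ ⦃y z : ℝ⦄, 0 < y → 0 < z → cyy y z < 0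
  czz_neg : ∀ ⦃y z : ℝ⦄, 0 < y → 0 < z → czz y z < 0
  cont2 : ContinuousOn (fun p : ℝ × ℝ => (cyy p.1 p.2, cyz p.1 p.2, czz p.1 p.2))
    {p : ℝ × ℝ | 0 < p.1 ∧ 0 < p.2}
  inada_y : ∀ ⦃z : ℝ⦄, 0 < z → Tendsto (fun y => cy y z) (𝓝[>] (0:ℝ)) atTop
  inada_z : ∀ ⦃y : ℝ⦄, 0 < y → Tendsto (fun z => cz y z) (𝓝[>] (0:ℝ)) atTop

/-- An equilibrium: `0 < S t < e1·G^t` and the difference equation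
`S_{t+1}·c_z = S_t·c_y − m·c^γ` at `(y_t, z_t) = (e1·G^t − S_t, e2·G^{t+1} + S_{t+1})`. -/
def IsEquilibrium (c cy cz : ℝ → ℝ → ℝ) (e1 e2 G γ m : ℝ) (S : ℕ → ℝ) : Prop :=
  ∀ t : ℕ, 0 < S t ∧ S t < e1 * G ^ t ∧
    S (t + 1) * cz (e1 * G ^ t - S t) (e2 * G ^ (t + 1) + S (t + 1)) =
      S t * cy (e1 * G ^ t - S t) (e2 * G ^ (t + 1) + S (t + 1)) -
        m * c (e1 * G ^ t - S t) (e2 * G ^ (t + 1) + S (t + 1)) ^ γ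

/-- The rent `r_t = m·c(y_t,z_t)^γ / c_y(y_t,z_t)`. -/
noncomputable def rent (c cy : ℝ → ℝ → ℝ) (e1 e2 G γ m : ℝ) (S : ℕ → ℝ) (t : ℕ) : ℝ :=
  m * c (e1 * G ^ t - S t) (e2 * G ^ (t + 1) + S (t + 1)) ^ γ /
    cy (e1 * G ^ t - S t) (e2 * G ^ (t + 1) + S (t + 1))

/-- The housing price `P_t = S_t − r_t`. -/
noncomputable def price (c cy : ℝ → ℝ → ℝ) (e1 e2 G γ m : ℝ) (S : ℕ → ℝ) (t : ℕ) : ℝ :=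
  S t - rent c cy e1 e2 G γ m S t

/-- The gross interest rate `R_t = S_{t+1}/P_t`. -/
noncomputable def irate (c cy : ℝ → ℝ → ℝ) (e1 e2 G γ m : ℝ) (S : ℕ → ℝ) (t : ℕ) : ℝ :=
  S (t + 1) / price c cy e1 e2 G γ m S t


theorem HasDerivAt.eq_of_eventually_comp_mul {g₁ g₂ : ℝ → ℝ} {a b l y : ℝ} (hl : l ≠ 0)
    (h₁ : HasDerivAt g₁ a (l * y)) (h₂ : HasDerivAt g₂ b y)
    (h : ∀ᶠ u in 𝓝 y, g₁ (l * u) = l * g₂ u) : a = b := by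
  have hmul : HasDerivAt (fun u => l * u) (l * 1) y := (hasDerivAt_id y).const_mul l
  have hcomp : HasDerivAt (fun u => g₁ (l * u)) (a * (l * 1)) y := h₁.comp y hmul
  have := (hcomp.congr_of_eventuallyEq (h.mono fun u hu => hu.symm)).unique (h₂.const_mul l)
  exact mul_left_cancel₀ hl (by linarith)

theorem antitoneOn_Ioi_of_hasDerivAt_nonpos {f f' : ℝ → ℝ} {a : ℝ}
    (hf : ∀ x, a < x → HasDerivAt f (f' x) x) (hf' : ∀ x, a < x → f' x ≤ 0) :
    AntitoneOn f (Ioi a) := by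
  refine antitoneOn_of_hasDerivWithinAt_nonpos (f' := f') (convex_Ioi a)
    (fun x hx => (hf x hx).continuousAt.continuousWithinAt) (fun x hx => ?_) (fun x hx => ?_)
  · rw [interior_Ioi] at hx ⊢
    exact (hf x hx).hasDerivWithinAt
  · rw [interior_Ioi] at hx
    exact hf' x hx

theorem monotoneOn_Ioi_of_hasDerivAt_nonneg {f f' : ℝ → ℝ} {a : ℝ}
    (hf : ∀ x, a < x → HasDerivAt f (f' x) x) (hf' : ∀ x, a < x → 0 ≤ f' x) :
    MonotoneOn f (Ioi a) := by
  refine monotoneOn_of_hasDerivWithinAt_nonneg (f' := f') (convex_Ioi a)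
    (fun x hx => (hf x hx).continuousAt.continuousWithinAt) (fun x hx => ?_) (fun x hx => ?_)
  · rw [interior_Ioi] at hx ⊢
    exact (hf x hx).hasDerivWithinAt
  · rw [interior_Ioi] at hx
    exact hf' x hx

theorem exists_neg_of_le_mul_sub {u : ℕ → ℝ} {g A : ℝ} (hg : 0 < g) (hA : 0 < A)
    (h : ∀ n, u (n + 1) ≤ g * u n - A * g ^ n) : ∃ n, u n < 0 := by
  have hbound : ∀ n : ℕ, u n ≤ g ^ n * (u 0 - n * (A / g)) := by
    intro n
    induction n with
    | zero => simp
    | succ n ih =>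
      calc u (n + 1) ≤ g * (g ^ n * (u 0 - n * (A / g))) - A * g ^ n := by
            linarith [h n, mul_le_mul_of_nonneg_left ih hg.le]
        _ = g ^ (n + 1) * (u 0 - (n + 1 : ℕ) * (A / g)) := by
            field_simp
            push_cast
            ring
  obtain ⟨n, hn⟩ := exists_nat_gt (u 0 / (A / g))
  refine ⟨n, (hbound n).trans_lt (mul_neg_of_pos_of_neg (pow_pos hg n) ?_)⟩
  rw [div_lt_iff₀ (div_pos hA hg)] at hn
  linarith

theorem eventually_mul_pow_le_sub {S r : ℕ → ℝ} {a M g G : ℝ} (ha : 0 < a) (hg : 0 ≤ g)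
    (hgG : g < G) (hS : ∀ t, a * G ^ t < S t) (hr : ∀ t, r t ≤ M * g ^ t) :
    ∀ᶠ t in atTop, a / 2 * G ^ t ≤ S t - r t := by
  have hG : 0 < G := hg.trans_lt hgG
  have hlim : Tendsto (fun t : ℕ => M * (g / G) ^ t) atTop (𝓝 0) := by
    simpa using (tendsto_pow_atTop_nhds_zero_of_lt_one (div_nonneg hg hG.le)
      ((div_lt_one hG).mpr hgG)).const_mul M
  filter_upwards [hlim.eventually (gt_mem_nhds (half_pos ha))] with t ht
  have hGt : 0 < G ^ t := pow_pos hG t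
  have : M * g ^ t ≤ a / 2 * G ^ t := by
    rw [div_pow, mul_div_assoc', div_lt_iff₀ hGt] at ht
    exact ht.le
  linarith [hS t, hr t]

theorem summable_div_of_mul_pow_le {r P : ℕ → ℝ} {b M g G : ℝ} (hb : 0 < b) (hg : 0 ≤ g)
    (hgG : g < G) (hP : ∀ᶠ t in atTop, b * G ^ t ≤ P t) (hr0 : ∀ t, 0 ≤ r t)
    (hr : ∀ t, r t ≤ M * g ^ t) : Summable fun t => r t / P t := by
  have hG : 0 < G := hg.trans_lt hgG
  have hgeo : Summable fun t : ℕ => M / b * (g / G) ^ t :=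
    (summable_geometric_of_lt_one (div_nonneg hg hG.le) ((div_lt_one hG).mpr hgG)).mul_left _
  refine hgeo.of_norm_bounded_eventually_nat (hP.mono fun t ht => ?_)
  have hbG : 0 < b * G ^ t := by positivity
  rw [Real.norm_of_nonneg (div_nonneg (hr0 t) (hbG.le.trans ht))]
  calc r t / P t ≤ M * g ^ t / (b * G ^ t) :=
        div_le_div₀ ((hr0 t).trans (hr t)) (hr t) hbG ht
    _ = M / b * (g / G) ^ t := by
        rw [div_pow]
        field_simp

theorem liminf_pos_of_mul_pow_le {P : ℕ → ℝ} {b B G : ℝ} (hb : 0 < b) (hG : 0 < G)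
    (hP : ∀ᶠ t in atTop, b * G ^ t ≤ P t) (hPB : ∀ t, P t ≤ B * G ^ t) :
    0 < liminf (fun t : ℕ => G ^ (-(t : ℝ)) * P t) atTop := by
  have hscale : ∀ t : ℕ, G ^ (-(t : ℝ)) * P t = P t / G ^ t := fun t => by
    rw [Real.rpow_neg hG.le, Real.rpow_natCast, inv_mul_eq_div]
  have hbdd : IsBoundedUnder (· ≤ ·) atTop fun t : ℕ => G ^ (-(t : ℝ)) * P t :=
    isBoundedUnder_of ⟨B, fun t => by rw [hscale, div_le_iff₀ (pow_pos hG t)]; exact hPB t⟩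
  refine hb.trans_le (le_liminf_of_le hbdd.isCoboundedUnder_ge (hP.mono fun t ht => ?_))
  rw [hscale, le_div_iff₀ (pow_pos hG t)]
  exact ht

/-- The marginal rate of substitution `c_y / c_z` at consumption ratio `z / y = ζ`; both partial
derivatives are homogeneous of degree 0. -/
noncomputable def mrs (cy cz : ℝ → ℝ → ℝ) (ζ : ℝ) : ℝ := cy 1 ζ / cz 1 ζ

namespace AssumptionC

variable {c cy cz cyy cyz czz : ℝ → ℝ → ℝ} (hC : AssumptionC c cy cz cyy cyz czz)
include hC

theorem c_le_c {y₁ y₂ z₁ z₂ : ℝ} (hy₁ : 0 < y₁) (hy : y₁ ≤ y₂) (hz₁ : 0 < z₁) (hz : z₁ ≤ z₂) :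
    c y₁ z₁ ≤ c y₂ z₂ := by
  have hy₂ := hy₁.trans_le hy
  calc c y₁ z₁ ≤ c y₂ z₁ :=
        monotoneOn_Ioi_of_hasDerivAt_nonneg (fun _ hu => hC.hderiv_y hu hz₁)
          (fun _ hu => (hC.cy_pos hu hz₁).le) hy₁ hy₂ hy
    _ ≤ c y₂ z₂ :=
        monotoneOn_Ioi_of_hasDerivAt_nonneg (fun _ hv => hC.hderiv_z hy₂ hv)
          (fun _ hv => (hC.cz_pos hy₂ hv).le) hz₁ (hz₁.trans_le hz) hz

theorem cy_mul_mul {l y z : ℝ} (hl : 0 < l) (hy : 0 < y) (hz : 0 < z) :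
    cy (l * y) (l * z) = cy y z :=
  HasDerivAt.eq_of_eventually_comp_mul hl.ne' (hC.hderiv_y (mul_pos hl hy) (mul_pos hl hz))
    (hC.hderiv_y hy hz) (eventually_gt_nhds hy |>.mono fun _ hu => hC.homog hl hu hz)

theorem cz_mul_mul {l y z : ℝ} (hl : 0 < l) (hy : 0 < y) (hz : 0 < z) :
    cz (l * y) (l * z) = cz y z :=
  HasDerivAt.eq_of_eventually_comp_mul hl.ne' (hC.hderiv_z (mul_pos hl hy) (mul_pos hl hz))
    (hC.hderiv_z hy hz) (eventually_gt_nhds hz |>.mono fun _ hv => hC.homog hl hy hv)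

theorem cy_eq_cy_one_div {y z : ℝ} (hy : 0 < y) (hz : 0 < z) : cy y z = cy 1 (z / y) := by
  simpa [mul_div_cancel₀ z hy.ne'] using hC.cy_mul_mul hy one_pos (div_pos hz hy)

theorem cz_eq_cz_one_div {y z : ℝ} (hy : 0 < y) (hz : 0 < z) : cz y z = cz 1 (z / y) := by
  simpa [mul_div_cancel₀ z hy.ne'] using hC.cz_mul_mul hy one_pos (div_pos hz hy)

theorem antitoneOn_cz_one : AntitoneOn (cz 1) (Ioi 0) :=
  antitoneOn_Ioi_of_hasDerivAt_nonpos (fun _ hv => hC.hderiv_zz one_pos hv)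
    (fun _ hv => (hC.czz_neg one_pos hv).le)

theorem monotoneOn_cy_one : MonotoneOn (cy 1) (Ioi 0) := by
  have hanti : AntitoneOn (fun u => cy u 1) (Ioi 0) :=
    antitoneOn_Ioi_of_hasDerivAt_nonpos (fun _ hu => hC.hderiv_yy hu one_pos)
      (fun _ hu => (hC.cyy_neg hu one_pos).le)
  intro a ha b hb hab
  have hinv : ∀ ζ : ℝ, 0 < ζ → cy 1 ζ = cy ζ⁻¹ 1 := fun ζ hζ => by
    simpa [mul_inv_cancel₀ hζ.ne'] using hC.cy_mul_mul hζ (inv_pos.mpr hζ) one_pos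
  rw [hinv a ha, hinv b hb]
  exact hanti (inv_pos.mpr (mem_Ioi.mp hb)) (inv_pos.mpr (mem_Ioi.mp ha)) (inv_anti₀ ha hab)

theorem mrs_pos {ζ : ℝ} (hζ : 0 < ζ) : 0 < mrs cy cz ζ :=
  div_pos (hC.cy_pos one_pos hζ) (hC.cz_pos one_pos hζ)

theorem monotoneOn_mrs : MonotoneOn (mrs cy cz) (Ioi 0) := fun _ ha _ hb hab =>
  div_le_div₀ (hC.cy_pos one_pos hb).le (hC.monotoneOn_cy_one ha hb hab) (hC.cz_pos one_pos hb)
    (hC.antitoneOn_cz_one ha hb hab)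

end AssumptionC

noncomputable def consRatio (e1 e2 G : ℝ) (S : ℕ → ℝ) (t : ℕ) : ℝ :=
  (e2 * G ^ (t + 1) + S (t + 1)) / (e1 * G ^ t - S t)

namespace IsEquilibrium

variable {c cy cz cyy cyz czz : ℝ → ℝ → ℝ} {e1 e2 G γ m : ℝ} {S : ℕ → ℝ}
  (hS : IsEquilibrium c cy cz e1 e2 G γ m S)
include hS

theorem pos (t : ℕ) : 0 < S t := (hS t).1

theorem young_pos (t : ℕ) : 0 < e1 * G ^ t - S t := sub_pos.mpr (hS t).2.1

theorem old_pos (he2 : 0 < e2) (hG : 0 < G) (t : ℕ) : 0 < e2 * G ^ (t + 1) + S (t + 1) := by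
  have := hS.pos (t + 1)
  positivity

theorem consRatio_pos (he2 : 0 < e2) (hG : 0 < G) (t : ℕ) : 0 < consRatio e1 e2 G S t :=
  div_pos (hS.old_pos he2 hG t) (hS.young_pos t)

theorem mul_div_lt_consRatio (he1 : 0 < e1) (he2 : 0 < e2) (hG : 0 < G) (t : ℕ) :
    G * (e2 / e1) < consRatio e1 e2 G S t := by
  rw [consRatio, lt_div_iff₀ (hS.young_pos t), pow_succ]
  field_simp
  nlinarith [mul_pos he1 (hS.pos (t + 1)), mul_pos (mul_pos hG he2) (hS.pos t)]

theorem consRatio_le (he1 : 0 < e1) (he2 : 0 < e2) (hG : 0 < G) {a b : ℝ} {t : ℕ} (ha : a < 1)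
    (hSa : S t ≤ a * (e1 * G ^ t)) (hSb : S (t + 1) ≤ b * (e1 * G ^ (t + 1))) :
    consRatio e1 e2 G S t ≤ G * (e2 / e1 + b) / (1 - a) := by
  rw [consRatio, div_le_div_iff₀ (hS.young_pos t) (by linarith), pow_succ]
  rw [pow_succ] at hSb
  have hb : 0 ≤ G * (e2 / e1 + b) := by
    have hE' : 0 < e1 * (G ^ t * G) := by positivity
    have : 0 ≤ b := by nlinarith [hS.pos (t + 1)]
    positivity
  calc (e2 * (G ^ t * G) + S (t + 1)) * (1 - a)
      ≤ (e2 * (G ^ t * G) + b * (e1 * (G ^ t * G))) * (1 - a) := by gcongr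
    _ = G * (e2 / e1 + b) * (e1 * G ^ t - a * (e1 * G ^ t)) := by field_simp
    _ ≤ G * (e2 / e1 + b) * (e1 * G ^ t - S t) := by gcongr

variable (hC : AssumptionC c cy cz cyy cyz czz)
include hC

theorem recursion (he2 : 0 < e2) (hG : 0 < G) (t : ℕ) :
    S (t + 1) * cz 1 (consRatio e1 e2 G S t) = S t * cy 1 (consRatio e1 e2 G S t) -
      m * c (e1 * G ^ t - S t) (e2 * G ^ (t + 1) + S (t + 1)) ^ γ := by
  rw [consRatio, ← hC.cy_eq_cy_one_div (hS.young_pos t) (hS.old_pos he2 hG t),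
    ← hC.cz_eq_cz_one_div (hS.young_pos t) (hS.old_pos he2 hG t)]
  exact (hS t).2.2

theorem lt_mul_mrs (he2 : 0 < e2) (hG : 0 < G) (hm : 0 < m) (t : ℕ) :
    S (t + 1) < S t * mrs cy cz (consRatio e1 e2 G S t) := by
  have hζ := hS.consRatio_pos he2 hG t
  have hc := hC.c_pos (hS.young_pos t) (hS.old_pos he2 hG t)
  have : 0 < m * c (e1 * G ^ t - S t) (e2 * G ^ (t + 1) + S (t + 1)) ^ γ := by positivity
  rw [mrs, ← mul_div_assoc, lt_div_iff₀ (hC.cz_pos one_pos hζ)]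
  linarith [hS.recursion hC he2 hG t]

theorem mrs_consRatio_le (he1 : 0 < e1) (he2 : 0 < e2) (hG : 0 < G) {a b : ℝ} {t : ℕ}
    (ha : a < 1) (hSa : S t ≤ a * (e1 * G ^ t)) (hSb : S (t + 1) ≤ b * (e1 * G ^ (t + 1))) :
    mrs cy cz (consRatio e1 e2 G S t) ≤ mrs cy cz (G * (e2 / e1 + b) / (1 - a)) := by
  have hζ := hS.consRatio_pos he2 hG t
  have hle := hS.consRatio_le he1 he2 hG ha hSa hSb
  exact hC.monotoneOn_mrs hζ (hζ.trans_le hle) hle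

theorem trap_step (he1 : 0 < e1) (he2 : 0 < e2) (hG : 0 < G) (hm : 0 < m) {s δ g : ℝ}
    (hs : s < 1) (hδ : 0 ≤ δ) (hδs : δ ≤ s)
    (hδF : δ * mrs cy cz (G * (e2 / e1 + 1) / (1 - s)) ≤ s * G)
    (hg : mrs cy cz (G * (e2 / e1 + s) / (1 - s)) ≤ g) (hgG : g ≤ G) {t : ℕ}
    (ht : S t ≤ δ * (e1 * G ^ t)) :
    S (t + 1) ≤ δ * (e1 * G ^ (t + 1)) ∧ mrs cy cz (consRatio e1 e2 G S t) ≤ g := by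
  have hE : 0 < e1 * G ^ t := by positivity
  have hts : S t ≤ s * (e1 * G ^ t) := ht.trans (by gcongr)
  have hnext : S (t + 1) < δ * (e1 * G ^ t) * mrs cy cz (consRatio e1 e2 G S t) :=
    (hS.lt_mul_mrs hC he2 hG hm t).trans_le <| mul_le_mul_of_nonneg_right ht
      (hC.mrs_pos (hS.consRatio_pos he2 hG t)).le
  -- A crude bound `S (t+1) < e1 G^(t+1)` first gives `S (t+1) ≤ s e1 G^(t+1)`, which then
  -- pins the consumption ratio below `G (w + s) / (1 - s)`.
  have hs' : S (t + 1) ≤ s * (e1 * G ^ (t + 1)) := by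
    have hF₁ := hS.mrs_consRatio_le hC he1 he2 hG (b := 1) hs hts
      (by simpa using (hS (t + 1)).2.1.le)
    calc S (t + 1) ≤ (e1 * G ^ t) * (δ * mrs cy cz (consRatio e1 e2 G S t)) := by linarith
      _ ≤ (e1 * G ^ t) * (s * G) :=
        mul_le_mul_of_nonneg_left ((mul_le_mul_of_nonneg_left hF₁ hδ).trans hδF) hE.le
      _ = s * (e1 * G ^ (t + 1)) := by ring
  have hF : mrs cy cz (consRatio e1 e2 G S t) ≤ g :=
    (hS.mrs_consRatio_le hC he1 he2 hG hs hts hs').trans hg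
  refine ⟨?_, hF⟩
  calc S (t + 1) ≤ δ * (e1 * G ^ t) * G := by
        nlinarith [mul_le_mul_of_nonneg_left (hF.trans hgG) (by positivity : 0 ≤ δ * (e1 * G ^ t))]
    _ = δ * (e1 * G ^ (t + 1)) := by ring

theorem succ_le_mul_sub (he1 : 0 < e1) (he2 : 0 < e2) (hG : 0 < G) (hγ : 0 ≤ γ) (hm : 0 < m)
    {δ g : ℝ} (hδ : δ < 1) {t : ℕ} (ht : S t ≤ δ * (e1 * G ^ t))
    (hF : mrs cy cz (consRatio e1 e2 G S t) ≤ g) :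
    S (t + 1) ≤ g * S t -
      m * c ((1 - δ) * e1) (e2 * G) ^ γ / cz 1 (G * (e2 / e1)) * (G ^ γ) ^ t := by
  have hy := hS.young_pos t
  have hz := hS.old_pos he2 hG t
  have hζ := hS.consRatio_pos he2 hG t
  have hGt : 0 < G ^ t := pow_pos hG t
  have hδe : 0 < (1 - δ) * e1 := by nlinarith
  have hrec : S (t + 1) = S t * mrs cy cz (consRatio e1 e2 G S t) -
      m * c (e1 * G ^ t - S t) (e2 * G ^ (t + 1) + S (t + 1)) ^ γ /
        cz 1 (consRatio e1 e2 G S t) := by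
    have := hS.recursion hC he2 hG t
    have := hC.cz_pos one_pos hζ
    rw [mrs]
    field_simp
    linarith
  have hc : G ^ t * c ((1 - δ) * e1) (e2 * G) ≤
      c (e1 * G ^ t - S t) (e2 * G ^ (t + 1) + S (t + 1)) := by
    rw [← hC.homog hGt hδe (by positivity)]
    refine hC.c_le_c (by positivity) (by linarith) (by positivity) ?_
    rw [pow_succ]
    linarith [hS.pos (t + 1)]
  have hcγ : (G ^ γ) ^ t * c ((1 - δ) * e1) (e2 * G) ^ γ ≤
      c (e1 * G ^ t - S t) (e2 * G ^ (t + 1) + S (t + 1)) ^ γ := by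
    have hκ := hC.c_pos hδe (mul_pos he2 hG)
    rw [Real.rpow_pow_comm hG.le, ← Real.mul_rpow hGt.le hκ.le]
    exact Real.rpow_le_rpow (by positivity) hc hγ
  have hcz : cz 1 (consRatio e1 e2 G S t) ≤ cz 1 (G * (e2 / e1)) := by
    have hw : 0 < G * (e2 / e1) := by positivity
    exact hC.antitoneOn_cz_one hw hζ (hS.mul_div_lt_consRatio he1 he2 hG t).le
  have hrent : m * c ((1 - δ) * e1) (e2 * G) ^ γ / cz 1 (G * (e2 / e1)) * (G ^ γ) ^ t ≤
      m * c (e1 * G ^ t - S t) (e2 * G ^ (t + 1) + S (t + 1)) ^ γ /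
        cz 1 (consRatio e1 e2 G S t) := by
    have := hC.c_pos hy hz
    rw [div_mul_eq_mul_div, mul_assoc, mul_comm (_ ^ γ)]
    exact div_le_div₀ (by positivity) (mul_le_mul_of_nonneg_left hcγ hm.le)
      (hC.cz_pos one_pos hζ) hcz
  have hSg : S t * mrs cy cz (consRatio e1 e2 G S t) ≤ g * S t := by
    rw [mul_comm g]
    exact mul_le_mul_of_nonneg_left hF (hS.pos t).le
  linarith

theorem exists_trap (he1 : 0 < e1) (he2 : 0 < e2) (hG : 1 < G) (hγ1 : γ < 1) (hm : 0 < m)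
    {wf : ℝ} (hwf : mrs cy cz (G * wf) = G ^ γ) (hw : e2 / e1 < wf) :
    ∃ δ, 0 < δ ∧ δ < 1 ∧ ∀ t, S t ≤ δ * (e1 * G ^ t) →
      S (t + 1) ≤ δ * (e1 * G ^ (t + 1)) ∧ mrs cy cz (consRatio e1 e2 G S t) ≤ G ^ γ := by
  have hG0 : 0 < G := one_pos.trans hG
  have hw0 : 0 < e2 / e1 := div_pos he2 he1
  have hwf0 : 0 < wf := hw0.trans hw
  set s := (wf - e2 / e1) / (1 + wf) with hs_def
  have hs0 : 0 < s := div_pos (by linarith) (by linarith)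
  have hs1 : s < 1 := (div_lt_one (by linarith)).mpr (by linarith)
  have hs_eq : G * (e2 / e1 + s) / (1 - s) = G * wf := by
    rw [div_eq_iff (by linarith), hs_def]
    field_simp
    ring
  set F₂ := mrs cy cz (G * (e2 / e1 + 1) / (1 - s))
  have hF₂ : 0 < F₂ := hC.mrs_pos (div_pos (by positivity) (by linarith))
  set δ := min s (s * G / F₂)
  have hδs : δ ≤ s := min_le_left _ _
  have hδF : δ * F₂ ≤ s * G :=
    (mul_le_mul_of_nonneg_right (min_le_right _ _) hF₂.le).trans_eq (div_mul_cancel₀ _ hF₂.ne')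
  have hGγ : G ^ γ ≤ G := by simpa using Real.rpow_le_rpow_of_exponent_le hG.le hγ1.le
  have hδ0 : 0 < δ := lt_min hs0 (by positivity)
  exact ⟨δ, hδ0, hδs.trans_lt hs1, fun t ht =>
    hS.trap_step hC he1 he2 hG0 hm hs1 hδ0.le hδs hδF (by rw [hs_eq, hwf]) hGγ ht⟩

theorem exists_mul_pow_lt (he1 : 0 < e1) (he2 : 0 < e2) (hG : 1 < G) (hγ0 : 0 ≤ γ)
    (hγ1 : γ < 1) (hm : 0 < m) {wf : ℝ} (hwf : mrs cy cz (G * wf) = G ^ γ) (hw : e2 / e1 < wf) :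
    ∃ a > 0, ∀ t, a * G ^ t < S t := by
  have hG0 : 0 < G := one_pos.trans hG
  obtain ⟨δ, hδ0, hδ1, htrap⟩ := hS.exists_trap hC he1 he2 hG hγ1 hm hwf hw
  refine ⟨δ * e1, by positivity, fun T => ?_⟩
  by_contra! hT
  have hstay : ∀ n, S (T + n) ≤ δ * (e1 * G ^ (T + n)) := by
    intro n
    induction n with
    | zero => simpa [mul_assoc] using hT
    | succ n ih => exact (htrap _ ih).1
  have hA : 0 < m * c ((1 - δ) * e1) (e2 * G) ^ γ / cz 1 (G * (e2 / e1)) := by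
    have := hC.c_pos (mul_pos (sub_pos.mpr hδ1) he1) (mul_pos he2 hG0)
    have := hC.cz_pos one_pos (mul_pos hG0 (div_pos he2 he1))
    positivity
  obtain ⟨n, hn⟩ := exists_neg_of_le_mul_sub (u := fun n => S (T + n)) (g := G ^ γ)
    (A := m * c ((1 - δ) * e1) (e2 * G) ^ γ / cz 1 (G * (e2 / e1)) * (G ^ γ) ^ T)
    (by positivity) (by positivity) fun n => by
      have := hS.succ_le_mul_sub hC he1 he2 hG0 hγ0 hm hδ1 (hstay n) (htrap _ (hstay n)).2
      rw [pow_add, ← mul_assoc] at this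
      simpa only [← add_assoc] using this
  exact (hS.pos _).not_gt hn

theorem rent_pos (he2 : 0 < e2) (hG : 0 < G) (hm : 0 < m) (t : ℕ) :
    0 < rent c cy e1 e2 G γ m S t := by
  have := hC.c_pos (hS.young_pos t) (hS.old_pos he2 hG t)
  have := hC.cy_pos (hS.young_pos t) (hS.old_pos he2 hG t)
  unfold rent
  positivity

theorem rent_le (he1 : 0 < e1) (he2 : 0 < e2) (hG : 0 < G) (hγ : 0 ≤ γ) (hm : 0 < m) (t : ℕ) :
    rent c cy e1 e2 G γ m S t ≤
      m * c e1 ((e1 + e2) * G) ^ γ / cy 1 (G * (e2 / e1)) * (G ^ γ) ^ t := by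
  have hy := hS.young_pos t
  have hz := hS.old_pos he2 hG t
  have hζ := hS.consRatio_pos he2 hG t
  have hGt : 0 < G ^ t := pow_pos hG t
  have hc : c (e1 * G ^ t - S t) (e2 * G ^ (t + 1) + S (t + 1)) ≤
      G ^ t * c e1 ((e1 + e2) * G) := by
    rw [← hC.homog hGt he1 (by positivity)]
    refine hC.c_le_c hy (by linarith [hS.pos t]) hz ?_
    have := (hS (t + 1)).2.1
    rw [pow_succ] at this ⊢
    linarith
  have hcγ : c (e1 * G ^ t - S t) (e2 * G ^ (t + 1) + S (t + 1)) ^ γ ≤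
      (G ^ γ) ^ t * c e1 ((e1 + e2) * G) ^ γ := by
    have hκ := hC.c_pos he1 (by positivity : 0 < (e1 + e2) * G)
    rw [Real.rpow_pow_comm hG.le, ← Real.mul_rpow hGt.le hκ.le]
    exact Real.rpow_le_rpow (hC.c_pos hy hz).le hc hγ
  have hcy : cy 1 (G * (e2 / e1)) ≤ cy 1 (consRatio e1 e2 G S t) :=
    hC.monotoneOn_cy_one (mem_Ioi.mpr (by positivity)) hζ
      (hS.mul_div_lt_consRatio he1 he2 hG t).le
  have := hC.c_pos he1 (by positivity : 0 < (e1 + e2) * G)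
  rw [rent, hC.cy_eq_cy_one_div hy hz, ← consRatio, div_mul_eq_mul_div, mul_assoc,
    mul_comm (_ ^ γ)]
  exact div_le_div₀ (by positivity) (mul_le_mul_of_nonneg_left hcγ hm.le)
    (hC.cy_pos one_pos (by positivity)) hcy

end IsEquilibrium

theorem stmt_12_general (c cy cz cyy cyz czz : ℝ → ℝ → ℝ)
    (hC : AssumptionC c cy cz cyy cyz czz) (e1 e2 G γ m wf : ℝ)
    (he1 : 0 < e1) (he2 : 0 < e2) (hG : 1 < G) (hγ0 : 0 < γ) (hγ1 : γ < 1) (hm : 0 < m)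
    (hwf : cy 1 (G * wf) / cz 1 (G * wf) = G ^ γ)
    (hw : e2 / e1 < wf)
    (S : ℕ → ℝ) (hS : IsEquilibrium c cy cz e1 e2 G γ m S) :
    0 < liminf (fun t : ℕ => G ^ (-(t : ℝ)) * price c cy e1 e2 G γ m S t) atTop ∧
    Summable (fun t : ℕ =>
      rent c cy e1 e2 G γ m S (t + 1) / price c cy e1 e2 G γ m S (t + 1)) := by
  have hG0 : 0 < G := one_pos.trans hG
  have hGγ : G ^ γ < G := by simpa using Real.rpow_lt_rpow_of_exponent_lt hG hγ1
  obtain ⟨a, ha, hS_lower⟩ := hS.exists_mul_pow_lt hC he1 he2 hG hγ0.le hγ1 hm hwf hw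
  have hrent_pos := hS.rent_pos hC he2 hG0 hm
  have hrent_le := hS.rent_le hC he1 he2 hG0 hγ0.le hm
  have hprice_lower : ∀ᶠ t in atTop, a / 2 * G ^ t ≤ price c cy e1 e2 G γ m S t :=
    eventually_mul_pow_le_sub ha (by positivity) hGγ hS_lower hrent_le
  have hprice_upper : ∀ t, price c cy e1 e2 G γ m S t ≤ e1 * G ^ t := fun t => by
    rw [price]
    linarith [hrent_pos t, (hS t).2.1]
  refine ⟨liminf_pos_of_mul_pow_le (half_pos ha) hG0 hprice_lower hprice_upper, ?_⟩
  exact (summable_nat_add_iff 1).mpr <| summable_div_of_mul_pow_le (half_pos ha)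
    (by positivity) hGγ hprice_lower (fun t => (hrent_pos t).le) hrent_le

/-- Bubble necessity: if `0 < γ < 1` and `w = e2/e1 < w_f^*`, then every equilibrium
satisfies `liminf G^{−t}·P_t > 0` and `∑_{t≥1} r_t/P_t < ∞` (every equilibrium is bubbly). -/
theorem stmt_12 (c cy cz cyy cyz czz : ℝ → ℝ → ℝ)
    (hC : AssumptionC c cy cz cyy cyz czz) (e1 e2 G γ m wf : ℝ)
    (he1 : 0 < e1) (he2 : 0 < e2) (hG : 1 < G) (hγ0 : 0 < γ) (hγ1 : γ < 1) (hm : 0 < m)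
    (hwf0 : 0 < wf) (hwf : cy 1 (G * wf) / cz 1 (G * wf) = G ^ γ)
    (hw : e2 / e1 < wf)
    (S : ℕ → ℝ) (hS : IsEquilibrium c cy cz e1 e2 G γ m S) :
    0 < liminf (fun t : ℕ => G ^ (-(t : ℝ)) * price c cy e1 e2 G γ m S t) atTop ∧
    Summable (fun t : ℕ =>
      rent c cy e1 e2 G γ m S (t + 1) / price c cy e1 e2 G γ m S (t + 1)) :=
  stmt_12_general c cy cz cyy cyz czz hC e1 e2 G γ m wf he1 he2 hG hγ0 hγ1 hm hwf hw S hS
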